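/- Let ℘ be an odd prime with 3 a primitive root modulo ℘^m, q = 3^{φ(℘^m)}, ξ a primitive ℘^m-th root of unity in 𝔽_q, and χ the canonical additive character of 𝔽_q. Then Σ_{i=0}^{℘^m−1} χ(ξ^i) equals (℘−1)ζ₃² + ℘^m − ℘ + 1 if ℘ ≡ 1 (mod 3); equals (℘−1)ζ₃² + ζ₃ + ℘^m − ℘ if ℘ ≡ −1 (mod 3) and m is odd; and equals ζ₃² + (℘−1)ζ₃ + ℘^m − ℘ if ℘ ≡ −1 (mod 3) and m is even, where ζ₃ = e^{2πi/3}. -/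

import Mathlib

/-!
Write `n = ℘ ^ m`. Over `𝔽₃` the trace is `Tr x = ∑_{j < φ(n)} x ^ 3 ^ j`, and since `3` generates
`(ℤ/n)ˣ` the exponents `3 ^ j` run once through the residues prime to `n`. Hence `Tr (ξ ^ i)` is the
Ramanujan sum `c_n(i) = n [n ∣ i] - ℘ ^ (m - 1) [℘ ^ (m - 1) ∣ i]` read mod `3`: it vanishes unless
`℘ ^ (m - 1) ∣ i`, equals `-℘ ^ (m - 1)` at the `℘ - 1` nonzero multiples, and `φ(n)` at `i = 0`.
The three cases are the residues of `℘ ^ (m - 1)` and `φ(n)` mod `3`.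
-/

/-- The canonical additive character of a finite field `F` of characteristic `3`. -/
noncomputable def canChar (F : Type*) [Field F] [Fintype F] [Algebra (ZMod 3) F]
    (x : F) : ℂ :=
  Complex.exp (2 * Real.pi * Complex.I / 3) ^ (Algebra.trace (ZMod 3) F x).val

open Finset

lemma sum_filter_dvd_range_mul {M : Type*} [AddCommMonoid M] {d : ℕ} (hd : d ≠ 0) (u : ℕ)
    (f : ℕ → M) : ∑ x ∈ range (d * u) with d ∣ x, f x = ∑ y ∈ range u, f (d * y) := by
  symm
  refine sum_nbij (d * ·) (fun y hy => ?_) (fun a _ b _ h => Nat.eq_of_mul_eq_mul_left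
    (Nat.pos_of_ne_zero hd) h) (fun x hx => ?_) (fun _ _ => rfl)
  · simp only [mem_filter, mem_range] at hy ⊢
    exact ⟨by rw [Nat.mul_lt_mul_left (Nat.pos_of_ne_zero hd)]; exact hy, dvd_mul_right d y⟩
  · simp only [coe_filter, mem_range, Set.mem_ofPred_eq] at hx
    obtain ⟨hx, y, rfl⟩ := hx
    exact ⟨y, by simpa using (Nat.mul_lt_mul_left (Nat.pos_of_ne_zero hd)).mp hx, rfl⟩

lemma IsPrimitiveRoot.sum_pow_mul_eq_ite {R : Type*} [CommRing R] [IsDomain R] {ω : R} {n : ℕ}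
    (hω : IsPrimitiveRoot ω n) (i : ℕ) :
    ∑ u ∈ range n, ω ^ (i * u) = if n ∣ i then (n : R) else 0 := by
  simp_rw [pow_mul]
  split_ifs with h
  · simp [(hω.pow_eq_one_iff_dvd i).mpr h]
  · have hne : ω ^ i - 1 ≠ 0 := sub_ne_zero.mpr fun h' => h ((hω.pow_eq_one_iff_dvd i).mp h')
    apply (mul_left_inj' hne).mp
    rw [geom_sum_mul, ← pow_mul, mul_comm, pow_mul, hω.pow_eq_one, one_pow, sub_self, zero_mul]

lemma IsPrimitiveRoot.sum_coprime_pow_mul_of_prime_pow {R : Type*} [CommRing R] [IsDomain R] {ω : R}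
    {p : ℕ} (hp : p.Prime) (m : ℕ) (hω : IsPrimitiveRoot ω (p ^ (m + 1))) (i : ℕ) :
    ∑ u ∈ range (p ^ (m + 1)) with (p ^ (m + 1)).Coprime u, ω ^ (i * u) =
      (if p ^ (m + 1) ∣ i then (p ^ (m + 1) : R) else 0) - if p ^ m ∣ i then (p ^ m : R) else 0 := by
  have hωp : IsPrimitiveRoot (ω ^ p) (p ^ m) := by
    simpa [pow_succ, hp.pos] using hω.pow_of_dvd hp.ne_zero (dvd_pow_self p m.succ_ne_zero)
  have hsplit := sum_filter_add_sum_filter_not (range (p ^ (m + 1))) (p ∣ ·) (fun u => ω ^ (i * u))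
  simp_rw [Nat.coprime_pow_left_iff m.succ_pos, hp.coprime_iff_not_dvd]
  rw [pow_succ', sum_filter_dvd_range_mul hp.ne_zero] at hsplit
  rw [← pow_succ', hω.sum_pow_mul_eq_ite] at hsplit
  simp_rw [mul_left_comm i p, pow_mul ω p, hωp.sum_pow_mul_eq_ite] at hsplit
  push_cast at hsplit ⊢
  linear_combination hsplit

lemma sum_range_totient_pow_eq_sum_coprime {M : Type*} [AddCommMonoid M] {n a : ℕ}
    (ha : orderOf (a : ZMod n) = n.totient) (f : ℕ → M) (hf : ∀ x, f (x % n) = f x) :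
    ∑ j ∈ range n.totient, f (a ^ j) = ∑ u ∈ range n with n.Coprime u, f u := by
  rcases Nat.eq_zero_or_pos n with rfl | hn
  · simp
  have hunit : IsUnit (a : ZMod n) :=
    (orderOf_pos_iff.mp (ha ▸ Nat.totient_pos.mpr hn)).isUnit
  have hcop : a.Coprime n := (ZMod.isUnit_iff_coprime a n).mp hunit
  have hmaps : ∀ j ∈ range n.totient, a ^ j % n ∈ {u ∈ range n | n.Coprime u} := fun j _ => by
    simp only [mem_filter, mem_range]
    exact ⟨Nat.mod_lt _ hn, ((ZMod.coprime_mod_iff_coprime _ n).mpr (hcop.pow_left j)).symm⟩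
  have hinj : Set.InjOn (a ^ · % n) (range n.totient) := fun j hj k hk hjk => by
    simp only [coe_range, Set.mem_Iio, ← ha] at hj hk
    refine pow_injOn_Iio_orderOf hj hk ?_
    simpa using (ZMod.natCast_eq_natCast_iff' (a ^ j) (a ^ k) n).mpr hjk
  refine sum_nbij (a ^ · % n) hmaps hinj ?_ fun j _ => (hf _).symm
  refine surjOn_of_injOn_of_card_le _ hmaps hinj ?_
  rw [card_range, Nat.totient]

lemma sum_range_mul_of_eq_on_multiples {R : Type*} [CommRing R] {d p : ℕ} (hd : d ≠ 0)
    (hp : p ≠ 0) {f : ℕ → R} {B C : R} (hB : ∀ y, 0 < y → y < p → f (d * y) = B)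
    (hC : ∀ i, ¬ d ∣ i → f i = C) :
    ∑ i ∈ range (d * p), f i = f 0 + (p - 1) * B + (d * p - p) * C := by
  have hmultiples : ∑ i ∈ range (d * p), (f i - C) = ∑ y ∈ range p, (f (d * y) - C) := by
    rw [← sum_filter_dvd_range_mul hd p (fun i => f i - C), sum_filter_of_ne]
    intro i _ hi
    by_contra hdvd
    exact hi (by rw [hC i hdvd, sub_self])
  have hsplit : ∑ y ∈ range p, (f (d * y) - C) = f 0 - C + (p - 1) * (B - C) := by
    obtain ⟨q, rfl⟩ := Nat.exists_eq_succ_of_ne_zero hp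
    rw [sum_range_succ', sum_congr rfl fun y hy => by
      rw [hB (y + 1) y.succ_pos (by simpa using mem_range.mp hy)]]
    simp only [sum_const, card_range, nsmul_eq_mul, mul_zero]
    push_cast
    ring
  rw [sum_sub_distrib, sum_const, card_range, nsmul_eq_mul, hsplit] at hmultiples
  push_cast at hmultiples
  linear_combination hmultiples

lemma FiniteField.algebraMap_trace_eq_sum_coprime (K L : Type*) [Field K] [Field L] [Finite L]
    [Algebra K L] {n : ℕ} (hK : orderOf (Nat.card K : ZMod n) = n.totient)
    (hL : Module.finrank K L = n.totient) {x : L} (hx : x ^ n = 1) :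
    algebraMap K L (Algebra.trace K L x) = ∑ u ∈ range n with n.Coprime u, x ^ u := by
  rw [FiniteField.algebraMap_trace_eq_sum_pow, hL]
  exact sum_range_totient_pow_eq_sum_coprime hK (x ^ ·) fun u => (pow_eq_pow_mod u hx).symm

local notation "ζ₃" => Complex.exp (2 * Real.pi * Complex.I / 3)

lemma sum_canChar_pow_primitiveRoot {p k : ℕ} (hp : p.Prime)
    (hprim : orderOf (3 : ZMod (p ^ (k + 1))) = (p ^ (k + 1)).totient)
    {F : Type*} [Field F] [Fintype F] [Algebra (ZMod 3) F]
    (hcard : Fintype.card F = 3 ^ (p ^ (k + 1)).totient)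
    {ξ : F} (hξ : IsPrimitiveRoot ξ (p ^ (k + 1))) :
    ∑ i ∈ range (p ^ (k + 1)), canChar F (ξ ^ i) =
      ζ₃ ^ ((p : ZMod 3) ^ k * (p - 1)).val + (p - 1) * ζ₃ ^ (-(p : ZMod 3) ^ k).val
        + (p ^ (k + 1) - p) := by
  have hfinrank : Module.finrank (ZMod 3) F = (p ^ (k + 1)).totient := by
    have h := Module.card_eq_pow_finrank (K := ZMod 3) (V := F)
    rw [ZMod.card, hcard] at h
    exact Nat.pow_right_injective (a := 3) (by norm_num) h.symm
  have htrace : ∀ i, Algebra.trace (ZMod 3) F (ξ ^ i) =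
      (if p ^ (k + 1) ∣ i then (p ^ (k + 1) : ZMod 3) else 0)
        - if p ^ k ∣ i then (p ^ k : ZMod 3) else 0 := by
    intro i
    apply (algebraMap (ZMod 3) F).injective
    have hK : orderOf (Nat.card (ZMod 3) : ZMod (p ^ (k + 1))) = (p ^ (k + 1)).totient := by
      simpa using hprim
    rw [FiniteField.algebraMap_trace_eq_sum_coprime _ _ hK hfinrank
      (by rw [← pow_mul, mul_comm, pow_mul, hξ.pow_eq_one, one_pow])]
    simp_rw [← pow_mul, hξ.sum_coprime_pow_mul_of_prime_pow hp k i]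
    split_ifs <;> simp
  have hpk : p ^ k ≠ 0 := pow_ne_zero k hp.ne_zero
  rw [pow_succ, sum_range_mul_of_eq_on_multiples (B := ζ₃ ^ (-(p : ZMod 3) ^ k).val) (C := 1)
    hpk hp.ne_zero]
  · rw [canChar, htrace 0, if_pos (dvd_zero _), if_pos (dvd_zero _),
      show (p : ZMod 3) ^ (k + 1) - p ^ k = p ^ k * (p - 1) by ring]
    push_cast
    ring
  · intro y hy hyp
    have hndvd : ¬ p ^ (k + 1) ∣ p ^ k * y := fun h => Nat.not_dvd_of_pos_of_lt hy hyp
      (Nat.dvd_of_mul_dvd_mul_left (Nat.pos_of_ne_zero hpk) (pow_succ p k ▸ h))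
    simp [canChar, htrace, hndvd]
  · intro i hi
    have hndvd : ¬ p ^ (k + 1) ∣ i := fun h => hi (dvd_of_mul_right_dvd (pow_succ p k ▸ h))
    simp [canChar, htrace, hndvd, hi]

theorem stmt_18_general (℘ m : ℕ) (h℘ : ℘.Prime) (hm : 1 ≤ m)
    (hprim : orderOf (3 : ZMod (℘ ^ m)) = (℘ ^ m).totient)
    (F : Type*) [Field F] [Fintype F] [Algebra (ZMod 3) F]
    (hcard : Fintype.card F = 3 ^ (℘ ^ m).totient)
    (ξ : F) (hξ : IsPrimitiveRoot ξ (℘ ^ m)) :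
    (℘ % 3 = 1 →
      (∑ i ∈ Finset.range (℘ ^ m), canChar F (ξ ^ i)) =
        ((℘ : ℂ) - 1) * Complex.exp (2 * Real.pi * Complex.I / 3) ^ 2
          + (℘ : ℂ) ^ m - (℘ : ℂ) + 1) ∧
    (℘ % 3 = 2 → Odd m →
      (∑ i ∈ Finset.range (℘ ^ m), canChar F (ξ ^ i)) =
        ((℘ : ℂ) - 1) * Complex.exp (2 * Real.pi * Complex.I / 3) ^ 2
          + Complex.exp (2 * Real.pi * Complex.I / 3) + (℘ : ℂ) ^ m - (℘ : ℂ)) ∧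
    (℘ % 3 = 2 → Even m →
      (∑ i ∈ Finset.range (℘ ^ m), canChar F (ξ ^ i)) =
        Complex.exp (2 * Real.pi * Complex.I / 3) ^ 2
          + ((℘ : ℂ) - 1) * Complex.exp (2 * Real.pi * Complex.I / 3)
          + (℘ : ℂ) ^ m - (℘ : ℂ)) := by
  obtain ⟨k, rfl⟩ : ∃ k, m = k + 1 := ⟨m - 1, by omega⟩
  rw [sum_canChar_pow_primitiveRoot h℘ hprim hcard hξ]
  have hmod : (℘ : ZMod 3) = (℘ % 3 : ℕ) := (ZMod.natCast_mod ℘ 3).symm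
  refine ⟨fun h1 => ?_, fun h2 hodd => ?_, fun h2 heven => ?_⟩
  · rw [show (℘ : ZMod 3) = 1 by rw [hmod, h1, Nat.cast_one], one_pow, sub_self, mul_zero,
      ZMod.val_zero, pow_zero, show (-1 : ZMod 3).val = 2 from rfl]
    ring
  · have hk : Even k := by simpa [Nat.odd_add_one] using hodd
    rw [show (℘ : ZMod 3) = -1 by rw [hmod, h2]; rfl, hk.neg_one_pow,
      show ((1 : ZMod 3) * (-1 - 1)).val = 1 from rfl, show (-1 : ZMod 3).val = 2 from rfl]
    ring
  · have hk : Odd k := by simpa [Nat.even_add_one] using heven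
    rw [show (℘ : ZMod 3) = -1 by rw [hmod, h2]; rfl, hk.neg_one_pow,
      show ((-1 : ZMod 3) * (-1 - 1)).val = 2 from rfl, show (-(-1) : ZMod 3).val = 1 from rfl]
    ring

theorem stmt_18 (℘ m : ℕ) (h℘ : ℘.Prime) (h℘odd : Odd ℘) (hm : 1 ≤ m)
    (hprim : orderOf (3 : ZMod (℘ ^ m)) = (℘ ^ m).totient)
    (F : Type*) [Field F] [Fintype F] [Algebra (ZMod 3) F]
    (hcard : Fintype.card F = 3 ^ (℘ ^ m).totient)
    (ξ : F) (hξ : IsPrimitiveRoot ξ (℘ ^ m)) :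
    (℘ % 3 = 1 →
      (∑ i ∈ Finset.range (℘ ^ m), canChar F (ξ ^ i)) =
        ((℘ : ℂ) - 1) * Complex.exp (2 * Real.pi * Complex.I / 3) ^ 2
          + (℘ : ℂ) ^ m - (℘ : ℂ) + 1) ∧
    (℘ % 3 = 2 → Odd m →
      (∑ i ∈ Finset.range (℘ ^ m), canChar F (ξ ^ i)) =
        ((℘ : ℂ) - 1) * Complex.exp (2 * Real.pi * Complex.I / 3) ^ 2
          + Complex.exp (2 * Real.pi * Complex.I / 3) + (℘ : ℂ) ^ m - (℘ : ℂ)) ∧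
    (℘ % 3 = 2 → Even m →
      (∑ i ∈ Finset.range (℘ ^ m), canChar F (ξ ^ i)) =
        Complex.exp (2 * Real.pi * Complex.I / 3) ^ 2
          + ((℘ : ℂ) - 1) * Complex.exp (2 * Real.pi * Complex.I / 3)
          + (℘ : ℂ) ^ m - (℘ : ℂ)) :=
  stmt_18_general ℘ m h℘ hm hprim F hcard ξ hξ
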